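/- Let n ≥ 1 and let ψ : ℂ^n → ℝ be C^∞ (as a function on ℝ^{2n}) and strongly convex. Then ψ̂ is real-valued and ℝ-differentiable on ℂ^n, the Wirtinger gradient map g_ψ : ℂ^n → ℂ^n is a bijection, and its inverse is g_{ψ̂}; that is, g_{ψ̂}(g_ψ(z)) = z for all z ∈ ℂ^n and g_ψ(g_{ψ̂}(w)) = w for all w ∈ ℂ^n. -/

import Mathlib

open scoped ComplexConjugate

noncomputable section

/-- The real pairing 2·Re(Σ_j z_j·conj(w_j)) on ℂⁿ. -/
def cpair {n : ℕ} (z w : EuclideanSpace ℂ (Fin n)) : ℝ :=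
  2 * (∑ j, z j * conj (w j)).re

/-- The complex Legendre transform ψ̂(w) = sup_z [2·Re(Σ z_j conj(w_j)) − ψ(z)] ∈ ℝ ∪ {+∞}. -/
def cLeg {n : ℕ} (ψ : EuclideanSpace ℂ (Fin n) → ℝ) (w : EuclideanSpace ℂ (Fin n)) : EReal :=
  ⨆ z : EuclideanSpace ℂ (Fin n), ((cpair z w - ψ z : ℝ) : EReal)

/-- The j-th standard basis vector of ℂⁿ. -/
def ej {n : ℕ} (j : Fin n) : EuclideanSpace ℂ (Fin n) := EuclideanSpace.single j 1

/-- The Wirtinger gradient map g_f(z)_j = (1/2)(∂_{x_j}f(z) + i·∂_{y_j}f(z)). -/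
def wGrad {n : ℕ} (f : EuclideanSpace ℂ (Fin n) → ℝ) (z : EuclideanSpace ℂ (Fin n)) :
    EuclideanSpace ℂ (Fin n) :=
  WithLp.toLp 2 fun j => (1 / 2 : ℂ) *
    (↑(fderiv ℝ f z (ej j)) + Complex.I * ↑(fderiv ℝ f z (Complex.I • ej j)))


def cpairCLM {n : ℕ} (w : EuclideanSpace ℂ (Fin n)) : EuclideanSpace ℂ (Fin n) →L[ℝ] ℝ :=
  (2 : ℝ) • (Complex.reCLM.comp (((innerSL ℂ w) : EuclideanSpace ℂ (Fin n) →L[ℂ] ℂ).restrictScalars ℝ))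

lemma cpairCLM_apply {n : ℕ} (w z : EuclideanSpace ℂ (Fin n)) :
    cpairCLM w z = cpair z w := by
  simp [cpairCLM, cpair, PiLp.inner_apply, RCLike.inner_apply, mul_comm]

lemma cpair_self {n : ℕ} (z : EuclideanSpace ℂ (Fin n)) : cpair z z = 2 * ‖z‖ ^ 2 := by
  have : cpair z z = 2 * (Complex.re (inner (𝕜 := ℂ) z z)) := by
    simp [cpair, PiLp.inner_apply, RCLike.inner_apply, mul_comm, -inner_self_eq_norm_sq_to_K]
  rw [this, ← RCLike.re_to_complex, inner_self_eq_norm_sq (𝕜 := ℂ)]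

lemma abs_cpair_le {n : ℕ} (z w : EuclideanSpace ℂ (Fin n)) :
    |cpair z w| ≤ 2 * ‖z‖ * ‖w‖ := by
  have h1 : cpair z w = 2 * (Complex.re (inner (𝕜 := ℂ) w z)) := by
    simp [cpair, PiLp.inner_apply, RCLike.inner_apply, mul_comm]
  rw [h1, abs_mul]
  have h2 : |Complex.re (inner (𝕜 := ℂ) w z)| ≤ ‖(inner (𝕜 := ℂ) w z : ℂ)‖ :=
    Complex.abs_re_le_norm _
  have h3 := norm_inner_le_norm (𝕜 := ℂ) w z
  calc |(2:ℝ)| * |Complex.re (inner (𝕜 := ℂ) w z)| ≤ 2 * (‖w‖ * ‖z‖) := by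
        rw [abs_two]; nlinarith [norm_nonneg (inner (𝕜 := ℂ) w z)]
    _ = 2 * ‖z‖ * ‖w‖ := by ring

lemma cpairCLM_sub_apply {n : ℕ} (u v z : EuclideanSpace ℂ (Fin n)) :
    cpairCLM (u - v) z = cpairCLM u z - cpairCLM v z := by
  simp [cpairCLM, inner_sub_left]; ring

lemma cpairCLM_inj {n : ℕ} {u v : EuclideanSpace ℂ (Fin n)}
    (h : (cpairCLM u : EuclideanSpace ℂ (Fin n) →L[ℝ] ℝ) = cpairCLM v) : u = v := by
  have h2 : cpairCLM (u - v) (u - v) = 0 := by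
    rw [cpairCLM_sub_apply, h, sub_self]
  rw [cpairCLM_apply, cpair_self] at h2
  have : ‖u - v‖ = 0 := by nlinarith [norm_nonneg (u - v)]
  have := norm_eq_zero.mp this
  exact sub_eq_zero.mp this

lemma decompose {n : ℕ} (v : EuclideanSpace ℂ (Fin n)) :
    v = ∑ j, ((v j).re • ej j + (v j).im • (Complex.I • ej j)) := by
  refine PiLp.ext fun k => ?_
  rw [WithLp.ofLp_sum, Finset.sum_apply]
  simp [ej, EuclideanSpace.single_apply, Complex.ext_iff, apply_ite Complex.re,
    apply_ite Complex.im, Finset.sum_ite_eq, Finset.sum_ite_eq']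

lemma helper_re (a b : ℝ) (c : ℂ) :
    2 * ((starRingEnd ℂ) ((1 / 2 : ℂ) * (↑a + Complex.I * ↑b)) * c).re
      = a * c.re + b * c.im := by
  simp [Complex.mul_re, Complex.mul_im, Complex.div_re, Complex.div_im]
  ring

lemma clm_eq_cpairCLM {n : ℕ} (L : EuclideanSpace ℂ (Fin n) →L[ℝ] ℝ) :
    L = cpairCLM (WithLp.toLp 2 fun j => (1 / 2 : ℂ) *
      (↑(L (ej j)) + Complex.I * ↑(L (Complex.I • ej j)))) := by
  ext v
  have hv := decompose v
  conv_lhs => rw [hv]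
  rw [map_sum]
  have hrhs : cpairCLM (WithLp.toLp 2 fun j => (1 / 2 : ℂ) *
      (↑(L (ej j)) + Complex.I * ↑(L (Complex.I • ej j)))) v
      = ∑ j, ((2:ℝ) * ((starRingEnd ℂ) ((1 / 2 : ℂ) *
        (↑(L (ej j)) + Complex.I * ↑(L (Complex.I • ej j)))) * v j).re) := by
    simp [cpairCLM, PiLp.inner_apply, RCLike.inner_apply, Complex.re_sum, Finset.mul_sum]
    exact Finset.sum_congr rfl fun _ _ => by ring
  rw [hrhs]
  refine Finset.sum_congr rfl fun j _ => ?_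
  rw [helper_re]
  simp only [map_add, map_smul, smul_eq_mul]
  ring

lemma fderiv_eq_cpairCLM {n : ℕ} (f : EuclideanSpace ℂ (Fin n) → ℝ)
    (z : EuclideanSpace ℂ (Fin n)) :
    fderiv ℝ f z = cpairCLM (wGrad f z) := clm_eq_cpairCLM _

section Analysis
variable {n : ℕ} {ψ : EuclideanSpace ℂ (Fin n) → ℝ} {δ : ℝ}

lemma line_hasDerivAt (b v : EuclideanSpace ℂ (Fin n)) (t : ℝ) :
    HasDerivAt (fun t : ℝ => b + t • v) v t := by
  simpa using ((hasDerivAt_id t).smul_const v).const_add b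

lemma deriv_along (hsm : ContDiff ℝ (⊤ : ℕ∞) ψ) (b v : EuclideanSpace ℂ (Fin n)) (t : ℝ) :
    HasDerivAt (fun t : ℝ => fderiv ℝ ψ (b + t • v) v)
      (fderiv ℝ (fderiv ℝ ψ) (b + t • v) v v) t := by
  have hψ' : Differentiable ℝ (fderiv ℝ ψ) := (hsm.fderiv_right (m := 1) (by exact WithTop.coe_le_coe.2 le_top)).differentiable one_ne_zero
  have h2 : HasDerivAt (fun t : ℝ => fderiv ℝ ψ (b + t • v))
      (fderiv ℝ (fderiv ℝ ψ) (b + t • v) v) t :=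
    (hψ' (b + t • v)).hasFDerivAt.comp_hasDerivAt t (line_hasDerivAt b v t)
  exact ((ContinuousLinearMap.apply ℝ ℝ v).hasFDerivAt.comp_hasDerivAt t h2)

lemma mono_grad (hsm : ContDiff ℝ (⊤ : ℕ∞) ψ)
    (hconv : ∀ z v : EuclideanSpace ℂ (Fin n),
      δ * ‖v‖ ^ 2 ≤ fderiv ℝ (fderiv ℝ ψ) z v v)
    (a b : EuclideanSpace ℂ (Fin n)) :
    δ * ‖a - b‖ ^ 2 ≤ fderiv ℝ ψ a (a - b) - fderiv ℝ ψ b (a - b) := by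
  set v := a - b with hv
  set φ : ℝ → ℝ := fun t => fderiv ℝ ψ (b + t • v) v - t * (δ * ‖v‖ ^ 2) with hφ
  have hd : ∀ t, HasDerivAt φ
      (fderiv ℝ (fderiv ℝ ψ) (b + t • v) v v - δ * ‖v‖ ^ 2) t := fun t =>
    (deriv_along hsm b v t).sub (hasDerivAt_mul_const _)
  have hmono : Monotone φ := by
    apply monotone_of_deriv_nonneg (fun t => (hd t).differentiableAt)
    intro t
    rw [(hd t).deriv]
    linarith [hconv (b + t • v) v]
  have h01 := hmono zero_le_one
  have e0 : φ 0 = fderiv ℝ ψ b v := by simp [hφ]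
  have e1 : φ 1 = fderiv ℝ ψ a v - δ * ‖v‖ ^ 2 := by
    simp [hφ, hv]
  rw [e0, e1] at h01
  linarith

lemma lower_bound (hsm : ContDiff ℝ (⊤ : ℕ∞) ψ) (hδ : 0 < δ)
    (hconv : ∀ z v : EuclideanSpace ℂ (Fin n),
      δ * ‖v‖ ^ 2 ≤ fderiv ℝ (fderiv ℝ ψ) z v v)
    (a b : EuclideanSpace ℂ (Fin n)) :
    ψ b + fderiv ℝ ψ b (a - b) + δ / 2 * ‖a - b‖ ^ 2 ≤ ψ a := by
  set v := a - b with hv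
  set χ : ℝ → ℝ := fun t =>
    ψ (b + t • v) - t * fderiv ℝ ψ b v - t ^ 2 * (δ / 2 * ‖v‖ ^ 2) with hχ
  have hψd : Differentiable ℝ ψ := hsm.differentiable (by simp)
  have hd : ∀ t, HasDerivAt χ
      (fderiv ℝ ψ (b + t • v) v - fderiv ℝ ψ b v
        - (2 * t ^ 1) * (δ / 2 * ‖v‖ ^ 2)) t := by
    intro t
    have h1 : HasDerivAt (fun t : ℝ => ψ (b + t • v)) (fderiv ℝ ψ (b + t • v) v) t :=
      (hψd (b + t • v)).hasFDerivAt.comp_hasDerivAt t (line_hasDerivAt b v t)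
    exact (h1.sub (hasDerivAt_mul_const _)).sub
      ((hasDerivAt_pow 2 t).mul_const _)
  have hmono : MonotoneOn χ (Set.Ici (0:ℝ)) := by
    apply monotoneOn_of_deriv_nonneg (convex_Ici 0)
    · exact Continuous.continuousOn (by
        exact continuous_iff_continuousAt.2 fun t => (hd t).differentiableAt.continuousAt)
    · intro t _
      exact (hd t).differentiableAt.differentiableWithinAt
    · intro t ht
      rw [interior_Ici] at ht
      rw [(hd t).deriv]
      have hm := mono_grad hsm hconv (b + t • v) b
      have hsub : b + t • v - b = t • v := by abel
      rw [hsub] at hm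
      have hns : ‖t • v‖ ^ 2 = t ^ 2 * ‖v‖ ^ 2 := by
        rw [norm_smul, Real.norm_eq_abs, mul_pow, sq_abs]
      rw [hns, map_smul, map_smul] at hm
      simp only [smul_eq_mul] at hm
      have ht' : 0 < t := ht
      nlinarith
  have h01 := hmono Set.self_mem_Ici (Set.mem_Ici.2 zero_le_one) zero_le_one
  have e0 : χ 0 = ψ b := by simp [hχ]
  have e1 : χ 1 = ψ a - fderiv ℝ ψ b v - δ / 2 * ‖v‖ ^ 2 := by
    simp [hχ, hv]
  rw [e0, e1] at h01
  linarith

end Analysis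

section Main
variable {n : ℕ} {ψ : EuclideanSpace ℂ (Fin n) → ℝ} {δ : ℝ}

lemma max_of_grad (hsm : ContDiff ℝ (⊤ : ℕ∞) ψ) (hδ : 0 < δ)
    (hconv : ∀ z v : EuclideanSpace ℂ (Fin n),
      δ * ‖v‖ ^ 2 ≤ fderiv ℝ (fderiv ℝ ψ) z v v)
    (w z : EuclideanSpace ℂ (Fin n)) (hz : wGrad ψ z = w)
    (x : EuclideanSpace ℂ (Fin n)) :
    cpair x w - ψ x ≤ cpair z w - ψ z := by
  have hl := lower_bound hsm hδ hconv x z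
  have hf : fderiv ℝ ψ z (x - z) = cpair x w - cpair z w := by
    rw [fderiv_eq_cpairCLM ψ z, hz, map_sub, cpairCLM_apply, cpairCLM_apply]
  have hsq : 0 ≤ δ / 2 * ‖x - z‖ ^ 2 := by positivity
  rw [hf] at hl
  linarith

lemma grad_inj (hsm : ContDiff ℝ (⊤ : ℕ∞) ψ) (hδ : 0 < δ)
    (hconv : ∀ z v : EuclideanSpace ℂ (Fin n),
      δ * ‖v‖ ^ 2 ≤ fderiv ℝ (fderiv ℝ ψ) z v v) :
    Function.Injective (wGrad ψ) := by
  intro a b hab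
  have h1 : fderiv ℝ ψ a = fderiv ℝ ψ b := by
    rw [fderiv_eq_cpairCLM ψ a, fderiv_eq_cpairCLM ψ b, hab]
  have h2 := mono_grad hsm hconv a b
  rw [h1, sub_self] at h2
  have hab0 : ‖a - b‖ = 0 := by
    by_contra hne
    have hpos : 0 < ‖a - b‖ := lt_of_le_of_ne (norm_nonneg _) (Ne.symm hne)
    nlinarith [mul_pos hδ (pow_pos hpos 2)]
  exact sub_eq_zero.mp (norm_eq_zero.mp hab0)

lemma grad_surj (hsm : ContDiff ℝ (⊤ : ℕ∞) ψ) (hδ : 0 < δ)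
    (hconv : ∀ z v : EuclideanSpace ℂ (Fin n),
      δ * ‖v‖ ^ 2 ≤ fderiv ℝ (fderiv ℝ ψ) z v v) :
    Function.Surjective (wGrad ψ) := by
  intro w
  have hψd : Differentiable ℝ ψ := hsm.differentiable (by simp)
  set F : EuclideanSpace ℂ (Fin n) → ℝ := fun z => cpairCLM w z - ψ z with hF
  have hFc : Continuous F := ((cpairCLM w).continuous).sub hψd.continuous
  set C : ℝ := ‖fderiv ℝ ψ 0‖ with hC
  have hC0 : 0 ≤ C := norm_nonneg _
  have hbound : ∀ z, F z ≤ (2 * ‖w‖ + C) * ‖z‖ - ψ 0 - δ / 2 * ‖z‖ ^ 2 := by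
    intro z
    have h1 : cpairCLM w z ≤ 2 * ‖z‖ * ‖w‖ := by
      rw [cpairCLM_apply]
      exact (le_abs_self _).trans (abs_cpair_le z w)
    have h2 := lower_bound hsm hδ hconv z 0
    rw [sub_zero] at h2
    have h3 : -(C * ‖z‖) ≤ fderiv ℝ ψ 0 z := by
      have := (fderiv ℝ ψ 0).le_opNorm z
      have habs : |fderiv ℝ ψ 0 z| ≤ C * ‖z‖ := by
        rwa [← Real.norm_eq_abs]
      linarith [neg_abs_le (fderiv ℝ ψ 0 z)]
    simp only [hF]
    nlinarith
  set R : ℝ := 2 * (2 * ‖w‖ + C) / δ + 1 with hR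
  have hR0 : 0 < R := by positivity
  obtain ⟨z₀, hz₀mem, hz₀max⟩ := (isCompact_closedBall (0 : EuclideanSpace ℂ (Fin n)) R).exists_isMaxOn
    ⟨0, by simp [hR0.le]⟩ hFc.continuousOn
  have hglobal : ∀ x, F x ≤ F z₀ := by
    intro x
    by_cases hx : x ∈ Metric.closedBall (0 : EuclideanSpace ℂ (Fin n)) R
    · exact hz₀max hx
    · have hxR : R < ‖x‖ := by
        rw [Metric.mem_closedBall, dist_zero_right, not_le] at hx
        exact hx
      have h0 : F 0 ≤ F z₀ := hz₀max (by simp [hR0.le])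
      have hF0 : F 0 = -ψ 0 := by simp [hF]
      have hb := hbound x
      have hs1 : 1 ≤ ‖x‖ := by
        have h' : 0 ≤ 2 * (2 * ‖w‖ + C) / δ := by positivity
        rw [hR] at hxR
        linarith
      have hδR : δ * R = 2 * (2 * ‖w‖ + C) + δ := by
        rw [hR, mul_add, mul_one, mul_div_cancel₀ _ (ne_of_gt hδ)]
      have h4 : 2 * (2 * ‖w‖ + C) + δ < δ * ‖x‖ := by
        rw [← hδR]
        exact mul_lt_mul_of_pos_left hxR hδ
      have h5 : 0 ≤ (δ * ‖x‖ - (2 * (2 * ‖w‖ + C) + δ)) * ‖x‖ :=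
        mul_nonneg (by linarith) (norm_nonneg x)
      have hKey : (2 * ‖w‖ + C) * ‖x‖ - δ / 2 * ‖x‖ ^ 2 < 0 := by
        nlinarith [norm_nonneg w, norm_nonneg x]
      have hx0 : F x < F 0 := by clear_value F C R; rw [hF0]; linarith
      exact le_trans hx0.le h0
  have hloc : IsLocalMax F z₀ := Filter.Eventually.of_forall hglobal
  have hfd := hloc.fderiv_eq_zero
  have hFd : fderiv ℝ F z₀ = cpairCLM w - fderiv ℝ ψ z₀ := by
    rw [hF]
    rw [fderiv_fun_sub ((cpairCLM w).differentiableAt) (hψd z₀), (cpairCLM w).fderiv]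
  rw [hFd, sub_eq_zero] at hfd
  refine ⟨z₀, cpairCLM_inj ?_⟩
  rw [← fderiv_eq_cpairCLM ψ z₀, ← hfd]

end Main

lemma cpair_comm {n : ℕ} (z w : EuclideanSpace ℂ (Fin n)) : cpair z w = cpair w z := by
  unfold cpair
  rw [Complex.re_sum, Complex.re_sum, Finset.mul_sum, Finset.mul_sum]
  exact Finset.sum_congr rfl fun j _ => by simp [Complex.mul_re]; ring

section Assemble
variable {n : ℕ}

lemma cpair_sub_right (x u v : EuclideanSpace ℂ (Fin n)) :
    cpair x (u - v) = cpair x u - cpair x v := by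
  rw [← cpairCLM_apply, ← cpairCLM_apply, ← cpairCLM_apply, cpairCLM_sub_apply]

lemma cpair_sub_left (a b y : EuclideanSpace ℂ (Fin n)) :
    cpair (a - b) y = cpair a y - cpair b y := by
  rw [← cpairCLM_apply, ← cpairCLM_apply, ← cpairCLM_apply, map_sub]



/-- for C^∞ strongly convex ψ : ℂⁿ → ℝ, the transform ψ̂ is real-valued and
ℝ-differentiable, g_ψ is a bijection with inverse g_{ψ̂}. -/
theorem complex_legendre_gradient_inverse (n : ℕ) (hn : 1 ≤ n)
    (ψ : EuclideanSpace ℂ (Fin n) → ℝ) (hsm : ContDiff ℝ (⊤ : ℕ∞) ψ)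
    (δ : ℝ) (hδ : 0 < δ)
    (hconv : ∀ z v : EuclideanSpace ℂ (Fin n),
      δ * ‖v‖ ^ 2 ≤ fderiv ℝ (fderiv ℝ ψ) z v v) :
    ∃ h : EuclideanSpace ℂ (Fin n) → ℝ,
      (∀ w, cLeg ψ w = (h w : EReal)) ∧
      Differentiable ℝ h ∧
      Function.Bijective (wGrad ψ) ∧
      (∀ z, wGrad h (wGrad ψ z) = z) ∧
      (∀ w, wGrad ψ (wGrad h w) = w) := by
  have hinj := grad_inj hsm hδ hconv
  have hsurj := grad_surj hsm hδ hconv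
  have hbij : Function.Bijective (wGrad ψ) := ⟨hinj, hsurj⟩
  set zmap : EuclideanSpace ℂ (Fin n) → EuclideanSpace ℂ (Fin n) :=
    Function.invFun (wGrad ψ) with hzmap
  have hri : ∀ w, wGrad ψ (zmap w) = w := Function.rightInverse_invFun hsurj
  have hli : ∀ a, zmap (wGrad ψ a) = a := Function.leftInverse_invFun hinj
  set h : EuclideanSpace ℂ (Fin n) → ℝ :=
    fun w => cpair (zmap w) w - ψ (zmap w) with hh
  have hmax : ∀ w x, cpair x w - ψ x ≤ h w := fun w x =>
    max_of_grad hsm hδ hconv w (zmap w) (hri w) x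
  -- Lipschitz estimate for zmap
  have hlip : ∀ w w', ‖zmap w' - zmap w‖ ≤ 2 / δ * ‖w' - w‖ := by
    intro w w'
    have hm := mono_grad hsm hconv (zmap w') (zmap w)
    have hfw : fderiv ℝ ψ (zmap w') = cpairCLM w' := by
      rw [fderiv_eq_cpairCLM ψ (zmap w'), hri w']
    have hfw0 : fderiv ℝ ψ (zmap w) = cpairCLM w := by
      rw [fderiv_eq_cpairCLM ψ (zmap w), hri w]
    rw [hfw, hfw0] at hm
    have hre : cpairCLM w' (zmap w' - zmap w) - cpairCLM w (zmap w' - zmap w)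
        = cpair (zmap w' - zmap w) (w' - w) := by
      rw [← cpairCLM_sub_apply, cpairCLM_apply]
    rw [hre] at hm
    have hub : cpair (zmap w' - zmap w) (w' - w)
        ≤ 2 * ‖zmap w' - zmap w‖ * ‖w' - w‖ :=
      (le_abs_self _).trans (abs_cpair_le _ _)
    rcases eq_or_lt_of_le (norm_nonneg (zmap w' - zmap w)) with h0 | h0
    · rw [← h0]
      positivity
    · have hchain : δ * ‖zmap w' - zmap w‖ ^ 2 ≤ 2 * ‖zmap w' - zmap w‖ * ‖w' - w‖ :=
        le_trans hm hub
      rw [div_mul_eq_mul_div, le_div_iff₀ hδ]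
      nlinarith [hchain, h0]
  -- derivative of h
  have hderiv : ∀ w, HasFDerivAt h (cpairCLM (zmap w)) w := by
    clear_value zmap h
    intro w
    rw [hasFDerivAt_iff_isLittleO_nhds_zero]
    rw [Asymptotics.isLittleO_iff]
    intro c hc
    rw [Metric.eventually_nhds_iff]
    refine ⟨c * δ / 4, by positivity, fun v hv => ?_⟩
    rw [dist_zero_right] at hv
    have hlow : h w + cpair (zmap w) v ≤ h (w + v) := by
      have := hmax (w + v) (zmap w)
      have e : cpair (zmap w) (w + v) = cpair (zmap w) w + cpair (zmap w) v := by
        have := cpair_sub_right (zmap w) (w + v) w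
        simp only [add_sub_cancel_left] at this
        linarith
      rw [e] at this
      simp only [hh] at this ⊢
      linarith
    have hup : h (w + v) ≤ h w + cpair (zmap (w + v)) v := by
      have h1 := hmax w (zmap (w + v))
      have e : cpair (zmap (w + v)) (w + v) = cpair (zmap (w + v)) w
          + cpair (zmap (w + v)) v := by
        have := cpair_sub_right (zmap (w + v)) (w + v) w
        simp only [add_sub_cancel_left] at this
        linarith
      simp only [hh] at h1 ⊢
      linarith
    have hmid : h (w + v) - h w - cpair (zmap w) v
        ≤ cpair (zmap (w + v) - zmap w) v := by
      rw [cpair_sub_left]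
      linarith
    have hub2 : cpair (zmap (w + v) - zmap w) v
        ≤ 2 * (2 / δ * ‖v‖) * ‖v‖ := by
      have h1 := (le_abs_self _).trans (abs_cpair_le (zmap (w + v) - zmap w) v)
      have h2 := hlip w (w + v)
      simp only [add_sub_cancel_left] at h2
      nlinarith [norm_nonneg v]
    have hnn : 0 ≤ h (w + v) - h w - cpair (zmap w) v := by linarith
    have habs : ‖h (w + v) - h w - cpairCLM (zmap w) v‖ ≤ 4 / δ * ‖v‖ * ‖v‖ := by
      rw [Real.norm_eq_abs, cpairCLM_apply, cpair_comm, abs_of_nonneg hnn]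
      have e2 : 2 * (2 / δ * ‖v‖) * ‖v‖ = 4 / δ * ‖v‖ * ‖v‖ := by ring
      linarith
    have h4δ : (0:ℝ) < 4 / δ := by positivity
    have hstep : 4 / δ * ‖v‖ ≤ c := by
      have h6 := mul_le_mul_of_nonneg_left hv.le h4δ.le
      have e : 4 / δ * (c * δ / 4) = c := by field_simp
      linarith
    calc ‖h (w + v) - h w - cpairCLM (zmap w) v‖ ≤ 4 / δ * ‖v‖ * ‖v‖ := habs
      _ ≤ c * ‖v‖ := mul_le_mul_of_nonneg_right hstep (norm_nonneg v)
  have hdiff : Differentiable ℝ h := fun w => (hderiv w).differentiableAt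
  have hwgradh : ∀ w, wGrad h w = zmap w := by
    intro w
    apply cpairCLM_inj
    rw [← fderiv_eq_cpairCLM h w, (hderiv w).fderiv]
  refine ⟨h, ?_, hdiff, hbij, ?_, ?_⟩
  · intro w
    apply le_antisymm
    · exact iSup_le fun x => EReal.coe_le_coe_iff.2 (hmax w x)
    · exact le_iSup_of_le (zmap w) (le_of_eq rfl)
  · intro z
    rw [hwgradh, hli]
  · intro w
    rw [hwgradh, hri]
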